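/- Let e ∈ 𝔽(r₁,r₂), let τ ∈ 𝓘, and let U be the syndrome table afforded by τ and e. Fix a monomial order ≤_T on ℕ×ℕ, and let Λ(U)‾ be the image of Λ(U) under the canonical projection L[X₁,X₂] → L(r₁,r₂). Then D_α(Λ(U)‾) = supp(e). -/

import Mathlib

/-- A monomial order on ℕ × ℕ: a linear order compatible with addition
for which (0,0) is the least element. -/
structure MonOrd where
  le : ℕ × ℕ → ℕ × ℕ → Prop
  refl : ∀ a, le a a
  trans : ∀ a b c, le a b → le b c → le a c
  antisymm : ∀ a b, le a b → le b a → a = b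
  total : ∀ a b, le a b ∨ le b a
  add_right : ∀ a b c, le a b → le (a + c) (b + c)
  zero_le : ∀ a, le (0, 0) a

/-- Strict version of a monomial order. -/
def MonOrd.lt (T : MonOrd) (a b : ℕ × ℕ) : Prop := T.le a b ∧ a ≠ b

/-- `s` is the leading power product exponent of `f` w.r.t. `T`. -/
def IsLP {L : Type} [Field L] (T : MonOrd) (f : (ℕ × ℕ) →₀ L) (s : ℕ × ℕ) : Prop :=
  s ∈ f.support ∧ ∀ m ∈ f.support, T.le m s

/-- `f[U]_n`, computed with respect to a given leading exponent `s` of `f`. -/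
noncomputable def fApp {L : Type} [Field L] (U : ℕ × ℕ → L) (f : (ℕ × ℕ) →₀ L)
    (s n : ℕ × ℕ) : L :=
  if s.1 ≤ n.1 ∧ s.2 ≤ n.2 then
    ∑ m ∈ f.support, f m * U (m.1 + n.1 - s.1, m.2 + n.2 - s.2)
  else 0

/-- `f` generates the doubly periodic array `U`. -/
def GeneratesU {L : Type} [Field L] (T : MonOrd) (U : ℕ × ℕ → L) (f : (ℕ × ℕ) →₀ L) : Prop :=
  ∃ s, IsLP T f s ∧ ∀ n, fApp U f s n = 0

/-- `f` generates the finite subarray `u^l` of `U`. -/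
def GeneratesUpTo {L : Type} [Field L] (T : MonOrd) (U : ℕ × ℕ → L) (l : ℕ × ℕ)
    (f : (ℕ × ℕ) →₀ L) : Prop :=
  ∃ s, IsLP T f s ∧ ∀ k, s.1 ≤ k.1 → s.2 ≤ k.2 → T.lt k l → fApp U f s k = 0

/-- `U` is a doubly periodic array of period r₁ × r₂. -/
def DoublyPeriodic {L : Type} (r₁ r₂ : ℕ) (U : ℕ × ℕ → L) : Prop :=
  ∀ n m : ℕ × ℕ, n.1 % r₁ = m.1 % r₁ → n.2 % r₂ = m.2 % r₂ → U n = U m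

/-- Evaluation of a bivariate polynomial at a point `(x, y)`. -/
noncomputable def polyEval {L : Type} [Field L] (f : (ℕ × ℕ) →₀ L) (x y : L) : L :=
  ∑ m ∈ f.support, f m * x ^ m.1 * y ^ m.2

/-- The syndrome table afforded by `τ` and `e`:  `u_n = e(α^(τ+n))`. -/
noncomputable def synTable {F L : Type} [Field F] [Field L] [Algebra F L] {r₁ r₂ : ℕ}
    (α₁ α₂ : L) (τ : Fin r₁ × Fin r₂) (e : Fin r₁ × Fin r₂ → F) : ℕ × ℕ → L :=
  fun n => ∑ p : Fin r₁ × Fin r₂,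
    algebraMap F L (e p) * (α₁ ^ ((τ.1 : ℕ) + n.1)) ^ (p.1 : ℕ)
      * (α₂ ^ ((τ.2 : ℕ) + n.2)) ^ (p.2 : ℕ)

/-- The weight ω(e): number of nonzero coefficients. -/
noncomputable def wt {F : Type} [Field F] {r₁ r₂ : ℕ} (e : Fin r₁ × Fin r₂ → F) : ℕ :=
  {p | e p ≠ 0}.ncard

/-- The hyperbolic set B(δ) of amplitude δ inside {0,…,r₁−1} × {0,…,r₂−1}. -/
def hypB (r₁ r₂ δ : ℕ) : Set (ℕ × ℕ) :=
  {l | l.1 < r₁ ∧ l.2 < r₂ ∧ (l.1 + 1) * (l.2 + 1) ≤ δ ∧ l ≠ (δ - 1, 0) ∧ l ≠ (0, δ - 1)}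

/-- The border set 𝔉 = {l ∈ B(2t+1) : 2t ≤ (l₁+1)(l₂+1)}. -/
def frontF (r₁ r₂ t : ℕ) : Set (ℕ × ℕ) :=
  {l ∈ hypB r₁ r₂ (2 * t + 1) | 2 * t ≤ (l.1 + 1) * (l.2 + 1)}

/-- The lexicographic order with X₁ > X₂. -/
def lexMonOrd : MonOrd where
  le a b := a.1 < b.1 ∨ (a.1 = b.1 ∧ a.2 ≤ b.2)
  refl a := by omega
  trans a b c h1 h2 := by omega
  antisymm a b h1 h2 := by
    obtain ⟨a1, a2⟩ := a; obtain ⟨b1, b2⟩ := b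
    simp_all only [Prod.mk.injEq]; omega
  total a b := by omega
  add_right a b c h := by
    obtain ⟨a1, a2⟩ := a; obtain ⟨b1, b2⟩ := b; obtain ⟨c1, c2⟩ := c
    simp_all only [Prod.mk_add_mk]; omega
  zero_le a := by
    obtain ⟨a1, a2⟩ := a; simp only []; omega

/-- The (reverse) graded order with X₂ > X₁. -/
def grMonOrd : MonOrd where
  le a b := a.1 + a.2 < b.1 + b.2 ∨ (a.1 + a.2 = b.1 + b.2 ∧ a.2 ≤ b.2)
  refl a := by omega
  trans a b c h1 h2 := by omega
  antisymm a b h1 h2 := by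
    obtain ⟨a1, a2⟩ := a; obtain ⟨b1, b2⟩ := b
    simp_all only [Prod.mk.injEq]; omega
  total a b := by omega
  add_right a b c h := by
    obtain ⟨a1, a2⟩ := a; obtain ⟨b1, b2⟩ := b; obtain ⟨c1, c2⟩ := c
    simp_all only [Prod.mk_add_mk]; omega
  zero_le a := by
    obtain ⟨a1, a2⟩ := a; simp only []; omega

/-- The ideal (X₁^{r₁} − 1, X₂^{r₂} − 1) of L[X₁,X₂]. -/
noncomputable def periodIdeal (L : Type) [Field L] (r₁ r₂ : ℕ) :
    Ideal (AddMonoidAlgebra L (ℕ × ℕ)) :=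
  Ideal.span {AddMonoidAlgebra.single (r₁, 0) 1 - 1, AddMonoidAlgebra.single (0, r₂) 1 - 1}

/-!
Write `z_p = α^p`. The syndrome table is `u_n = ∑_p e_p z_p^τ z_p^n`, a linear combination of the
characters `n ↦ z_p^n` of `ℕ × ℕ`, which are pairwise distinct because `α₁, α₂` are primitive
roots. If `s` is the leading exponent of `f`, then `f[U]_{s+k} = ∑_p e_p z_p^τ f(z_p) z_p^k`, so by
Dedekind's independence of characters a nonzero `f` generates `U` iff `f(z_p) = 0` for every
`p ∈ supp(e)`. Evaluation at `z_p` factors through `L(r₁, r₂)`, which gives `supp(e) ⊆ D_α(Λ(U)‾)`;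
for `p ∉ supp(e)`, a product of lines through the points `z_m`, `m ∈ supp(e)`, each avoiding `z_p`,
is an element of `Λ(U)` that does not vanish at `z_p`.
-/

open Finset

lemma MonOrd.exists_max_of_nonempty (T : MonOrd) {s : Finset (ℕ × ℕ)} (hs : s.Nonempty) :
    ∃ a ∈ s, ∀ b ∈ s, T.le b a := by
  induction hs using Finset.Nonempty.cons_induction with
  | singleton a => exact ⟨a, mem_singleton_self a, fun b hb => mem_singleton.1 hb ▸ T.refl b⟩
  | cons a s _ _ ih =>
    obtain ⟨m, hm, hmax⟩ := ih
    rcases T.total a m with ham | hma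
    · exact ⟨m, mem_cons_of_mem hm, (forall_mem_cons _ _).2 ⟨ham, hmax⟩⟩
    · exact ⟨a, mem_cons_self a s,
        (forall_mem_cons _ _).2 ⟨T.refl a, fun b hb => T.trans _ _ _ (hmax b hb) hma⟩⟩

lemma exists_isLP {L : Type} [Field L] (T : MonOrd) {f : (ℕ × ℕ) →₀ L} (hf : f ≠ 0) :
    ∃ s, IsLP T f s :=
  T.exists_max_of_nonempty (Finsupp.support_nonempty_iff.2 hf)

section Characters

variable {L : Type} [Field L]

def powChar (z : L × L) : Multiplicative (ℕ × ℕ) →* L where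
  toFun m := z.1 ^ m.toAdd.1 * z.2 ^ m.toAdd.2
  map_one' := by simp
  map_mul' a b := by simp only [toAdd_mul, Prod.fst_add, Prod.snd_add, pow_add]; ring

lemma powChar_ofAdd (z : L × L) (m : ℕ × ℕ) :
    powChar z (Multiplicative.ofAdd m) = z.1 ^ m.1 * z.2 ^ m.2 := rfl

lemma powChar_injective : Function.Injective (powChar : L × L → _) := by
  intro z w h
  have h₁ := DFunLike.congr_fun h (Multiplicative.ofAdd (1, 0))
  have h₂ := DFunLike.congr_fun h (Multiplicative.ofAdd (0, 1))
  simp only [powChar_ofAdd, pow_one, pow_zero, mul_one, one_mul] at h₁ h₂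
  exact Prod.ext h₁ h₂

noncomputable def evalAt (z : L × L) : AddMonoidAlgebra L (ℕ × ℕ) →ₐ[L] L :=
  AddMonoidAlgebra.lift L L (ℕ × ℕ) (powChar z)

lemma evalAt_single (z : L × L) (m : ℕ × ℕ) (c : L) :
    evalAt z (AddMonoidAlgebra.single m c) = c * (z.1 ^ m.1 * z.2 ^ m.2) := by
  rw [evalAt, AddMonoidAlgebra.lift_single, smul_eq_mul, powChar_ofAdd]

lemma polyEval_coeff (f : AddMonoidAlgebra L (ℕ × ℕ)) (z : L × L) :
    polyEval f.coeff z.1 z.2 = evalAt z f := by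
  rw [evalAt, AddMonoidAlgebra.lift_apply, polyEval, Finsupp.sum]
  exact sum_congr rfl fun m _ => by rw [smul_eq_mul, powChar_ofAdd, mul_assoc]

lemma periodIdeal_le_ker_evalAt {r₁ r₂ : ℕ} {z : L × L} (h₁ : z.1 ^ r₁ = 1) (h₂ : z.2 ^ r₂ = 1) :
    periodIdeal L r₁ r₂ ≤ RingHom.ker (evalAt z) := by
  rw [periodIdeal, Ideal.span_le, Set.insert_subset_iff, Set.singleton_subset_iff]
  simp [evalAt_single, h₁, h₂]

lemma polyEval_coeff_eq_of_mk_eq {r₁ r₂ : ℕ} {x y : L} (hx : x ^ r₁ = 1) (hy : y ^ r₂ = 1)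
    {f g : AddMonoidAlgebra L (ℕ × ℕ)}
    (hfg : Ideal.Quotient.mk (periodIdeal L r₁ r₂) f = Ideal.Quotient.mk _ g) :
    polyEval f.coeff x y = polyEval g.coeff x y := by
  have hker := periodIdeal_le_ker_evalAt (z := (x, y)) hx hy (Ideal.Quotient.eq.1 hfg)
  rwa [RingHom.mem_ker, map_sub, sub_eq_zero, ← polyEval_coeff, ← polyEval_coeff] at hker

lemma forall_mem_image_mk_polyEval_eq_zero_iff {r₁ r₂ : ℕ} {x y : L} (hx : x ^ r₁ = 1)
    (hy : y ^ r₂ = 1) (S : Set (AddMonoidAlgebra L (ℕ × ℕ))) :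
    (∀ g ∈ Ideal.Quotient.mk (periodIdeal L r₁ r₂) '' S,
        ∀ h, Ideal.Quotient.mk (periodIdeal L r₁ r₂) h = g → polyEval h.coeff x y = 0) ↔
      ∀ f ∈ S, polyEval f.coeff x y = 0 := by
  refine ⟨fun hS f hf => hS _ ⟨f, hf, rfl⟩ f rfl, ?_⟩
  rintro hS _ ⟨f, hf, rfl⟩ h hh
  rw [polyEval_coeff_eq_of_mk_eq hx hy hh, hS f hf]

lemma exists_evalAt_ne_zero_and_eq_zero_on [DecidableEq L] (S : Finset (L × L)) {z : L × L}
    (hz : z ∉ S) :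
    ∃ f : AddMonoidAlgebra L (ℕ × ℕ), evalAt z f ≠ 0 ∧ ∀ w ∈ S, evalAt w f = 0 := by
  let line (w : L × L) : AddMonoidAlgebra L (ℕ × ℕ) :=
    if w.1 = z.1 then AddMonoidAlgebra.single (0, 1) 1 - AddMonoidAlgebra.single 0 w.2
    else AddMonoidAlgebra.single (1, 0) 1 - AddMonoidAlgebra.single 0 w.1
  have evalAt_line (v w : L × L) :
      evalAt v (line w) = if w.1 = z.1 then v.2 - w.2 else v.1 - w.1 := by
    split_ifs <;> simp [line, *, evalAt_single]
  refine ⟨∏ w ∈ S, line w, ?_, fun w hw => ?_⟩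
  · rw [map_prod, prod_ne_zero_iff]
    intro w hw
    have hwz : w ≠ z := fun h => hz (h ▸ hw)
    rw [evalAt_line]
    split_ifs with h
    · exact sub_ne_zero.2 fun h' => hwz (Prod.ext h h'.symm)
    · exact sub_ne_zero.2 fun h' => h h'.symm
  · rw [map_prod]
    exact prod_eq_zero hw (by rw [evalAt_line]; split_ifs <;> exact sub_self _)

end Characters

section ExponentialSums

variable {L : Type} [Field L] {ι : Type} [Fintype ι]

noncomputable def expSum (a : ι → L) (z : ι → L × L) (n : ℕ × ℕ) : L :=
  ∑ i, a i * powChar (z i) (Multiplicative.ofAdd n)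

lemma fApp_expSum_add (a : ι → L) (z : ι → L × L) (f : (ℕ × ℕ) →₀ L) (s k : ℕ × ℕ) :
    fApp (expSum a z) f s (s + k) =
      ∑ i, a i * polyEval f (z i).1 (z i).2 * powChar (z i) (Multiplicative.ofAdd k) := by
  have hshift (m : ℕ × ℕ) : (m.1 + (s + k).1 - s.1, m.2 + (s + k).2 - s.2) = m + k := by
    ext <;> simp only [Prod.fst_add, Prod.snd_add] <;> omega
  rw [fApp, if_pos (by simp)]
  simp only [hshift, expSum, ofAdd_add, map_mul, powChar_ofAdd, polyEval, mul_sum, sum_mul]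
  rw [Finset.sum_comm]
  exact sum_congr rfl fun i _ => sum_congr rfl fun m _ => by ring

theorem generatesU_expSum_iff (T : MonOrd) {a : ι → L} {z : ι → L × L}
    (hz : Function.Injective z) {f : (ℕ × ℕ) →₀ L} :
    GeneratesU T (expSum a z) f ↔ f ≠ 0 ∧ ∀ i, a i * polyEval f (z i).1 (z i).2 = 0 := by
  constructor
  · rintro ⟨s, hs, hzero⟩
    refine ⟨Finsupp.support_nonempty_iff.1 ⟨s, hs.1⟩, ?_⟩
    have hind := (linearIndependent_monoidHom (Multiplicative (ℕ × ℕ)) L).comp _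
      (powChar_injective.comp hz)
    refine Fintype.linearIndependent_iff.1 hind _ (funext fun k => ?_)
    simpa [fApp_expSum_add] using hzero (s + k.toAdd)
  · rintro ⟨hf, hvan⟩
    obtain ⟨s, hs⟩ := exists_isLP T hf
    refine ⟨s, hs, fun n => ?_⟩
    by_cases hsn : s ≤ n
    · obtain ⟨k, rfl⟩ := exists_add_of_le hsn
      simp [fApp_expSum_add, hvan]
    · rw [fApp, if_neg (by simpa [Prod.le_def] using hsn)]

end ExponentialSums

section SyndromeTable

variable {F L : Type} [Field F] [Field L] [Algebra F L] {r₁ r₂ : ℕ} {α₁ α₂ : L}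

lemma injective_pow_pair (hα₁ : IsPrimitiveRoot α₁ r₁) (hα₂ : IsPrimitiveRoot α₂ r₂) :
    Function.Injective fun p : Fin r₁ × Fin r₂ => (α₁ ^ (p.1 : ℕ), α₂ ^ (p.2 : ℕ)) := by
  intro p q hpq
  simp only [Prod.mk.injEq] at hpq
  exact Prod.ext (Fin.ext (hα₁.pow_inj p.1.2 q.1.2 hpq.1))
    (Fin.ext (hα₂.pow_inj p.2.2 q.2.2 hpq.2))

lemma synTable_eq_expSum (α₁ α₂ : L) (τ : Fin r₁ × Fin r₂) (e : Fin r₁ × Fin r₂ → F) :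
    synTable α₁ α₂ τ e =
      expSum (fun p => algebraMap F L (e p) *
          powChar (α₁ ^ (p.1 : ℕ), α₂ ^ (p.2 : ℕ)) (Multiplicative.ofAdd (τ.1, τ.2)))
        fun p => (α₁ ^ (p.1 : ℕ), α₂ ^ (p.2 : ℕ)) := by
  ext n
  simp only [synTable, expSum, powChar_ofAdd]
  exact sum_congr rfl fun p _ => by ring

theorem generatesU_synTable_iff (T : MonOrd) (hα₁ : IsPrimitiveRoot α₁ r₁)
    (hα₂ : IsPrimitiveRoot α₂ r₂) (τ : Fin r₁ × Fin r₂) (e : Fin r₁ × Fin r₂ → F)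
    {f : (ℕ × ℕ) →₀ L} :
    GeneratesU T (synTable α₁ α₂ τ e) f ↔
      f ≠ 0 ∧ ∀ p, e p ≠ 0 → polyEval f (α₁ ^ (p.1 : ℕ)) (α₂ ^ (p.2 : ℕ)) = 0 := by
  rw [synTable_eq_expSum, generatesU_expSum_iff T (injective_pow_pair hα₁ hα₂)]
  refine and_congr_right fun _ => forall_congr' fun p => ?_
  have hα₁0 : α₁ ≠ 0 := hα₁.ne_zero (Fin.pos p.1).ne'
  have hα₂0 : α₂ ≠ 0 := hα₂.ne_zero (Fin.pos p.2).ne'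
  simp [powChar_ofAdd, hα₁0, hα₂0, or_iff_not_imp_left]

end SyndromeTable

theorem defining_set_of_lambda_eq_support_general
    (F : Type) [Field F]
    (L : Type) [Field L] [Algebra F L]
    (r₁ r₂ : ℕ)
    (α₁ α₂ : L) (hα₁ : IsPrimitiveRoot α₁ r₁) (hα₂ : IsPrimitiveRoot α₂ r₂)
    (T : MonOrd) (e : Fin r₁ × Fin r₂ → F) (τ : Fin r₁ × Fin r₂)
    (U : ℕ × ℕ → L) (hU : U = synTable α₁ α₂ τ e) :
    {p : Fin r₁ × Fin r₂ |
        ∀ g ∈ Ideal.Quotient.mk (periodIdeal L r₁ r₂) ''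
            {f : AddMonoidAlgebra L (ℕ × ℕ) | GeneratesU T U f.coeff ∨ f = 0},
          ∀ h : AddMonoidAlgebra L (ℕ × ℕ), Ideal.Quotient.mk (periodIdeal L r₁ r₂) h = g →
            polyEval h.coeff (α₁ ^ (p.1 : ℕ)) (α₂ ^ (p.2 : ℕ)) = 0} =
      {p : Fin r₁ × Fin r₂ | e p ≠ 0} := by
  classical
  subst hU
  ext p
  let pt : Fin r₁ × Fin r₂ → L × L := fun m => (α₁ ^ (m.1 : ℕ), α₂ ^ (m.2 : ℕ))
  have hpt₁ : (α₁ ^ (p.1 : ℕ)) ^ r₁ = 1 := by rw [pow_right_comm, hα₁.pow_eq_one, one_pow]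
  have hpt₂ : (α₂ ^ (p.2 : ℕ)) ^ r₂ = 1 := by rw [pow_right_comm, hα₂.pow_eq_one, one_pow]
  simp only [Set.mem_ofPred_eq, forall_mem_image_mk_polyEval_eq_zero_iff hpt₁ hpt₂,
    generatesU_synTable_iff T hα₁ hα₂]
  constructor
  · intro hvan hep
    have hp : pt p ∉ (univ.filter fun m => e m ≠ 0).image pt := fun hmem => by
      obtain ⟨m, hm, hmp⟩ := mem_image.1 hmem
      exact (mem_filter.1 hm).2 (injective_pow_pair hα₁ hα₂ hmp ▸ hep)
    obtain ⟨f, hfp, hf⟩ := exists_evalAt_ne_zero_and_eq_zero_on _ hp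
    have hf0 : f.coeff ≠ 0 := fun h0 => hfp (by rw [AddMonoidAlgebra.coeff_eq_zero.1 h0, map_zero])
    have hΛ : ∀ m, e m ≠ 0 → polyEval f.coeff (pt m).1 (pt m).2 = 0 := fun m hm =>
      (polyEval_coeff f (pt m)).trans (hf (pt m) (mem_image_of_mem pt (by simpa using hm)))
    exact hfp ((polyEval_coeff f (pt p)).symm.trans (hvan f (Or.inl ⟨hf0, hΛ⟩)))
  · rintro hep f (⟨-, hvan⟩ | rfl)
    · exact hvan p hep
    · simp [polyEval]

/-- the defining set of the projection of Λ(U) to L(r₁,r₂)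
equals the support of e. -/
theorem defining_set_of_lambda_eq_support
    (q : ℕ) (hq : IsPrimePow q)
    (F : Type) [Field F] [Fintype F] (hF : Fintype.card F = q)
    (L : Type) [Field L] [Algebra F L]
    (r₁ r₂ : ℕ) (hr₁ : 0 < r₁) (hr₂ : 0 < r₂) (hco : Nat.Coprime q (r₁ * r₂))
    (α₁ α₂ : L) (hα₁ : IsPrimitiveRoot α₁ r₁) (hα₂ : IsPrimitiveRoot α₂ r₂)
    (T : MonOrd) (e : Fin r₁ × Fin r₂ → F) (τ : Fin r₁ × Fin r₂)
    (U : ℕ × ℕ → L) (hU : U = synTable α₁ α₂ τ e) :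
    {p : Fin r₁ × Fin r₂ |
        ∀ g ∈ Ideal.Quotient.mk (periodIdeal L r₁ r₂) ''
            {f : AddMonoidAlgebra L (ℕ × ℕ) | GeneratesU T U f.coeff ∨ f = 0},
          ∀ h : AddMonoidAlgebra L (ℕ × ℕ), Ideal.Quotient.mk (periodIdeal L r₁ r₂) h = g →
            polyEval h.coeff (α₁ ^ (p.1 : ℕ)) (α₂ ^ (p.2 : ℕ)) = 0} =
      {p : Fin r₁ × Fin r₂ | e p ≠ 0} :=
  defining_set_of_lambda_eq_support_general F L r₁ r₂ α₁ α₂ hα₁ hα₂ T e τ U hU
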